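/- Let V be a finite type, let F be a nonempty superset-closed family of finsets of V, let k be a natural number, and let S1 and S2 be members of F with |S1| = |S2| = k. Then S1 and S2 are joined by a path in the k-token-jumping graph of F (the simple graph whose vertices are the members of F of cardinality exactly k, with two such members adjacent if and only if their symmetric difference has exactly two elements) if and only if S1 and S2 are joined by a path in the (k+1)-TAR graph of F. -/

import Mathlib

variable {V : Type*} [Fintype V] [DecidableEq V]

/-- A family of finsets is superset-closed if it is closed under taking supersets. -/
def SupersetClosed (F : Finset (Finset V)) : Prop :=
  ∀ ⦃S T : Finset V⦄, S ∈ F → S ⊆ T → T ∈ F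

/-- A minimal member of a family: a member no proper subset of which is a member. -/
def IsMinimalMem (F : Finset (Finset V)) (M : Finset V) : Prop :=
  M ∈ F ∧ ∀ M' : Finset V, M' ⊂ M → M' ∉ F

/-- The TAR graph of a family of finsets: vertices are the members of the family,
two members being adjacent iff their symmetric difference has exactly one element. -/
def TARGraph (F : Finset (Finset V)) : SimpleGraph {S : Finset V // S ∈ F} where
  Adj S T := (symmDiff S.1 T.1).card = 1
  symm := ⟨fun S T h => by simpa only [symmDiff_comm] using h⟩
  loopless := ⟨fun S h => by simp [symmDiff_self] at h⟩

instance (F : Finset (Finset V)) : DecidableRel (TARGraph F).Adj :=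
  fun S T => inferInstanceAs (Decidable ((symmDiff S.1 T.1).card = 1))

/-- The `k`-TAR graph: the subgraph of the TAR graph induced on members of
cardinality at most `k`. -/
def kTARGraph (F : Finset (Finset V)) (k : ℕ) :
    SimpleGraph {S : Finset V // S ∈ F ∧ S.card ≤ k} where
  Adj S T := (symmDiff S.1 T.1).card = 1
  symm := ⟨fun S T h => by simpa only [symmDiff_comm] using h⟩
  loopless := ⟨fun S h => by simp [symmDiff_self] at h⟩

/-- The `k`-token-jumping graph: vertices are the members of the family of
cardinality exactly `k`, two such members being adjacent iff their symmetric
difference has exactly two elements. -/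
def TJGraph (F : Finset (Finset V)) (k : ℕ) :
    SimpleGraph {S : Finset V // S ∈ F ∧ S.card = k} where
  Adj S T := (symmDiff S.1 T.1).card = 2
  symm := ⟨fun S T h => by simpa only [symmDiff_comm] using h⟩
  loopless := ⟨fun S h => by simp [symmDiff_self] at h⟩

/-!
A TAR path through sets of size at most `k + 1` is shadowed by a token-jumping path: carry
along a `k`-set `X ∈ F` comparable (under inclusion) with the current set. When the walk
moves on to `C`, still `#(X ∪ C) ≤ k + 1`, so the next shadow can be chosen inside `X ∪ C`, and two
`k`-sets whose union has `k + 1` elements differ by one jump. Conversely a jump from `A` to `C`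
is the TAR path `A, A ∪ C, C`, and `A ∪ C ∈ F` by superset-closure.
-/

open Finset
open scoped symmDiff

namespace Finset

variable {α : Type*} {s t x : Finset α} {k : ℕ}

lemma eq_of_subset_or_subset_of_card_eq (h : s ⊆ t ∨ t ⊆ s) (hc : #s = #t) : s = t := by
  rcases h with h | h
  · exact eq_of_subset_of_card_le h hc.ge
  · exact (eq_of_subset_of_card_le h hc.le).symm

variable [DecidableEq α]

lemma card_symmDiff_eq_card_sdiff_add_card_sdiff (s t : Finset α) :
    #(s ∆ t) = #(s \ t) + #(t \ s) := by
  rw [symmDiff_def, sup_eq_union, card_union_of_disjoint disjoint_sdiff_sdiff]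

lemma subset_or_subset_of_card_symmDiff_eq_one (h : #(s ∆ t) = 1) : s ⊆ t ∨ t ⊆ s := by
  rw [card_symmDiff_eq_card_sdiff_add_card_sdiff] at h
  rw [← sdiff_eq_empty_iff_subset, ← sdiff_eq_empty_iff_subset, ← card_eq_zero, ← card_eq_zero]
  omega

lemma card_symmDiff_of_subset (h : s ⊆ t) : #(s ∆ t) = #t - #s := by
  rw [symmDiff_of_le h, card_sdiff_of_subset h]

lemma card_symmDiff_eq_two_iff (hs : #s = k) (ht : #t = k) :
    #(s ∆ t) = 2 ↔ #(s ∪ t) = k + 1 := by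
  have hsum := card_union_add_card_inter s t
  have hdiff : #(s ∆ t) = #(s ∪ t) - #(s ∩ t) := by
    rw [symmDiff_eq_sup_sdiff_inf, sup_eq_union, inf_eq_inter,
      card_sdiff_of_subset inter_subset_union]
  omega

lemma card_union_le_of_card_symmDiff_eq_one (hx : #x ≤ k) (hs : #s ≤ k + 1) (ht : #t ≤ k + 1)
    (hsx : s ⊆ x ∨ x ⊆ s) (hst : #(s ∆ t) = 1) : #(x ∪ t) ≤ k + 1 := by
  rcases hsx with hsx | hxs
  · have hts : #(t \ s) ≤ 1 := by
      have := card_symmDiff_eq_card_sdiff_add_card_sdiff s t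
      omega
    calc #(x ∪ t) = #(x ∪ (t \ x)) := by rw [union_sdiff_self_eq_union]
      _ ≤ #(x ∪ (t \ s)) :=
        card_le_card (union_subset_union_right (sdiff_subset_sdiff subset_rfl hsx))
      _ ≤ #x + #(t \ s) := card_union_le _ _
      _ ≤ k + 1 := by omega
  · rcases subset_or_subset_of_card_symmDiff_eq_one hst with hst | hts
    · rwa [union_eq_right.mpr (hxs.trans hst)]
    · exact (card_le_card (union_subset hxs hts)).trans hs

end Finset

variable {F : Finset (Finset V)} {k : ℕ}

lemma kTARGraph.adj_of_subset {S T : Finset V} (hS : S ∈ F ∧ #S ≤ k) (hT : T ∈ F ∧ #T ≤ k)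
    (h : S ⊆ T) (hc : #T = #S + 1) : (kTARGraph F k).Adj ⟨S, hS⟩ ⟨T, hT⟩ := by
  change #(S ∆ T) = 1
  rw [card_symmDiff_of_subset h]
  omega

namespace TJGraph

lemma reachable_of_card_union_le {X Y : Finset V} (hX : X ∈ F) (hY : Y ∈ F)
    (hXc : #X = k) (hYc : #Y = k) (hXY : #(X ∪ Y) ≤ k + 1) :
    (TJGraph F k).Reachable ⟨X, hX, hXc⟩ ⟨Y, hY, hYc⟩ := by
  obtain rfl | hne := eq_or_ne X Y
  · rfl
  refine SimpleGraph.Adj.reachable ((card_symmDiff_eq_two_iff hXc hYc).mpr ?_)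
  by_contra hXY'
  have hX' := eq_of_subset_of_card_le (subset_union_left : X ⊆ X ∪ Y) (by omega)
  have hY' := eq_of_subset_of_card_le (subset_union_right : Y ⊆ X ∪ Y) (by omega)
  exact hne (hX'.trans hY'.symm)

lemma exists_reachable_of_card_union_le (hsup : SupersetClosed F) {X C : Finset V}
    (hX : X ∈ F) (hXc : #X = k) (hC : C ∈ F) (hCc : #C ≤ k + 1) (hXC : #(X ∪ C) ≤ k + 1) :
    ∃ (Y : Finset V) (hY : Y ∈ F) (hYc : #Y = k), (C ⊆ Y ∨ Y ⊆ C) ∧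
      (TJGraph F k).Reachable ⟨X, hX, hXc⟩ ⟨Y, hY, hYc⟩ := by
  obtain hCk | hCk := lt_or_ge k #C
  · have hXC' : X ∪ C = C := (eq_of_subset_of_card_le subset_union_right (by omega)).symm
    exact ⟨X, hX, hXc, Or.inr (hXC' ▸ subset_union_left), .refl _⟩
  obtain ⟨Y, hCY, hYXC, hYc⟩ := exists_subsuperset_card_eq (subset_union_right : C ⊆ X ∪ C) hCk
    (hXc ▸ card_le_card subset_union_left)
  have hY : Y ∈ F := hsup hC hCY
  refine ⟨Y, hY, hYc, Or.inl hCY, reachable_of_card_union_le hX hY hXc hYc ?_⟩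
  exact (card_le_card (union_subset subset_union_left hYXC)).trans hXC

lemma exists_reachable_of_walk (hsup : SupersetClosed F)
    {A B : {S : Finset V // S ∈ F ∧ #S ≤ k + 1}} (w : (kTARGraph F (k + 1)).Walk A B)
    {X : Finset V} (hX : X ∈ F) (hXc : #X = k) (hAX : A.1 ⊆ X ∨ X ⊆ A.1) :
    ∃ (Y : Finset V) (hY : Y ∈ F) (hYc : #Y = k), (B.1 ⊆ Y ∨ Y ⊆ B.1) ∧
      (TJGraph F k).Reachable ⟨X, hX, hXc⟩ ⟨Y, hY, hYc⟩ := by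
  induction w generalizing X with
  | nil => exact ⟨X, hX, hXc, hAX, .refl _⟩
  | @cons u v _ huv _ ih =>
    have hXv := card_union_le_of_card_symmDiff_eq_one hXc.le u.2.2 v.2.2 hAX huv
    obtain ⟨Y, hY, hYc, hvY, hXY⟩ :=
      exists_reachable_of_card_union_le hsup hX hXc v.2.1 v.2.2 hXv
    obtain ⟨Z, hZ, hZc, hBZ, hYZ⟩ := ih hY hYc hvY
    exact ⟨Z, hZ, hZc, hBZ, hXY.trans hYZ⟩

lemma Adj.kTARGraph_reachable (hsup : SupersetClosed F)
    {A C : {S : Finset V // S ∈ F ∧ #S = k}} (hAC : (TJGraph F k).Adj A C) :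
    (kTARGraph F (k + 1)).Reachable ⟨A.1, A.2.1, by omega⟩ ⟨C.1, C.2.1, by omega⟩ := by
  have hU : #(A.1 ∪ C.1) = k + 1 := (card_symmDiff_eq_two_iff A.2.2 C.2.2).mp hAC
  have hUF : A.1 ∪ C.1 ∈ F ∧ #(A.1 ∪ C.1) ≤ k + 1 := ⟨hsup A.2.1 subset_union_left, hU.le⟩
  have hAU := kTARGraph.adj_of_subset ⟨A.2.1, by omega⟩ hUF subset_union_left (by omega)
  have hCU := kTARGraph.adj_of_subset ⟨C.2.1, by omega⟩ hUF subset_union_right (by omega)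
  exact hAU.reachable.trans hCU.symm.reachable

lemma Reachable.kTARGraph_reachable (hsup : SupersetClosed F)
    {A B : {S : Finset V // S ∈ F ∧ #S = k}} (h : (TJGraph F k).Reachable A B) :
    (kTARGraph F (k + 1)).Reachable ⟨A.1, A.2.1, by omega⟩ ⟨B.1, B.2.1, by omega⟩ := by
  obtain ⟨w⟩ := h
  induction w with
  | nil => rfl
  | cons hadj _ ih => exact (Adj.kTARGraph_reachable hsup hadj).trans ih

end TJGraph

theorem stmt17 (F : Finset (Finset V)) (hsup : SupersetClosed F)
    (k : ℕ) (S1 S2 : Finset V) (hS1 : S1 ∈ F) (hS2 : S2 ∈ F)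
    (hc1 : S1.card = k) (hc2 : S2.card = k) :
    (TJGraph F k).Reachable ⟨S1, hS1, hc1⟩ ⟨S2, hS2, hc2⟩ ↔
    (kTARGraph F (k + 1)).Reachable ⟨S1, hS1, by omega⟩ ⟨S2, hS2, by omega⟩ := by
  refine ⟨TJGraph.Reachable.kTARGraph_reachable hsup, fun ⟨w⟩ => ?_⟩
  obtain ⟨Y, hY, hYc, hS2Y, hS1Y⟩ :=
    TJGraph.exists_reachable_of_walk hsup w hS1 hc1 (Or.inl subset_rfl)
  obtain rfl : S2 = Y := eq_of_subset_or_subset_of_card_eq hS2Y (hc2.trans hYc.symm)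
  exact hS1Y
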